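/- The partial products ∏_{n=1}^{N} [((4n-1)(2n+1)) / ((4n+1)(2n-1))]^{u_n} converge as N → ∞ to 1/2. -/

import Mathlib

/-!
Write `P(f) = ∏_{n ≥ 1} f(n)^{u_n}`. Since `u_{2m} = u_m` and `u_{2m+1} = -u_m`, grouping
the factors in pairs gives `P(f) = f(1)⁻¹ · P(m ↦ f(2m) / f(2m+1))`. For `f(n) = (2n+p)/(2n+q)`
the paired factors are `1 + O(m⁻²)`, so these products converge to positive limits.
For `y(n) = n/(n+1)` and `w(n) = (2n+1)/(2n+2)` one has `y(2m)/y(2m+1) = y(m)/w(m)²`, so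
pairing gives `P(y) = 2 P(y) / P(w)²` and hence `P(w)² = 2` (Woods–Robbins). With
`a(n) = (2n-1)/(2n+1)` the factor of the theorem is `a(2n)/a(2n+1) · w(2n)/w(2n+1) · w(n)/a(n)`,
so by pairing the product tends to `a(1) w(1) P(w)² = 1/3 · 3/4 · 2 = 1/2`.
-/

open Filter Finset Topology

/-- The Thue–Morse sequence with values `±1`: `u n = (-1)^(s₂ n)` where `s₂ n`
is the sum of the binary digits of `n`. -/
def u (n : ℕ) : ℤ := (-1) ^ (Nat.digits 2 n).sum

theorem u_two_mul (n : ℕ) : u (2 * n) = u n := by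
  rcases n.eq_zero_or_pos with rfl | hn
  · rfl
  rw [u, u, show 2 * n = 0 + 2 * n by ring,
    Nat.digits_add 2 one_lt_two 0 n two_pos (Or.inr hn.ne')]
  simp

theorem u_two_mul_add_one (n : ℕ) : u (2 * n + 1) = -u n := by
  rw [u, u, show 2 * n + 1 = 1 + 2 * n by ring,
    Nat.digits_add 2 one_lt_two 1 n one_lt_two (Or.inl one_ne_zero)]
  simp [pow_add]

theorem u_one : u 1 = -1 := by
  simp [u]

theorem u_eq_one_or_neg_one (n : ℕ) : u n = 1 ∨ u n = -1 :=
  neg_one_pow_eq_or ℤ _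

theorem norm_u_zsmul {E : Type*} [SeminormedAddCommGroup E] (n : ℕ) (x : E) :
    ‖u n • x‖ = ‖x‖ := by
  rcases u_eq_one_or_neg_one n with h | h <;> simp [h]

@[to_additive sum_Icc_two_mul_add_one_zsmul_u]
theorem prod_Icc_two_mul_add_one_zpow_u {α : Type*} [DivisionCommMonoid α] (f : ℕ → α)
    (N : ℕ) :
    ∏ n ∈ Icc 1 (2 * N + 1), f n ^ u n =
      (f 1)⁻¹ * ∏ m ∈ Icc 1 N, (f (2 * m) / f (2 * m + 1)) ^ u m := by
  induction N with
  | zero => simp [u_one]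
  | succ N ih =>
    rw [show 2 * (N + 1) + 1 = 2 * N + 1 + 1 + 1 by ring, prod_Icc_succ_top (by omega),
      prod_Icc_succ_top (by omega), ih, prod_Icc_succ_top (by omega),
      show 2 * N + 1 + 1 = 2 * (N + 1) by ring, u_two_mul_add_one, u_two_mul, zpow_neg,
      div_zpow, div_eq_mul_inv]
    simp only [mul_assoc]

theorem tendsto_of_tendsto_two_mul_of_tendsto_two_mul_add_one {X : Type*} {s : ℕ → X}
    {l : Filter X} (he : Tendsto (fun n => s (2 * n)) atTop l)
    (ho : Tendsto (fun n => s (2 * n + 1)) atTop l) : Tendsto s atTop l := by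
  intro U hU
  obtain ⟨a, ha⟩ := eventually_atTop.1 (he hU)
  obtain ⟨b, hb⟩ := eventually_atTop.1 (ho hU)
  refine eventually_atTop.2 ⟨2 * (a + b), fun n hn => ?_⟩
  obtain ⟨k, rfl | rfl⟩ := Nat.even_or_odd' n
  · exact ha k (by omega)
  · exact hb k (by omega)

theorem tendsto_sum_Icc_one {d : ℕ → ℝ} (hd : Summable d) :
    Tendsto (fun N => ∑ n ∈ Icc 1 N, d n) atTop (𝓝 (∑' n, d (n + 1))) := by
  refine ((summable_nat_add_iff 1).2 hd).hasSum.tendsto_sum_nat.congr fun N => ?_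
  rw [range_eq_Ico, sum_Ico_add', zero_add, Ico_add_one_right_eq_Icc]

theorem exists_tendsto_sum_Icc_zsmul_u {x : ℕ → ℝ} (hx : Tendsto x atTop (𝓝 0))
    (hpair : Summable fun m => x (2 * m) - x (2 * m + 1)) :
    ∃ S, Tendsto (fun N => ∑ n ∈ Icc 1 N, u n • x n) atTop (𝓝 S) := by
  have hd : Summable fun m => u m • (x (2 * m) - x (2 * m + 1)) :=
    hpair.norm.of_norm_bounded fun m => (norm_u_zsmul m _).le
  obtain ⟨S, hodd⟩ :
      ∃ S, Tendsto (fun N => ∑ n ∈ Icc 1 (2 * N + 1), u n • x n) atTop (𝓝 S) := by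
    simp_rw [sum_Icc_two_mul_add_one_zsmul_u]
    exact ⟨_, tendsto_const_nhds.add (tendsto_sum_Icc_one hd)⟩
  have hlast : Tendsto (fun N => u (2 * N + 2) • x (2 * N + 2)) atTop (𝓝 0) :=
    (squeeze_zero_norm (fun n => (norm_u_zsmul n (x n)).le)
      (tendsto_zero_iff_norm_tendsto_zero.1 hx)).comp
      (tendsto_atTop_mono (fun N => show N ≤ 2 * N + 2 by omega) tendsto_id)
  have heven : Tendsto (fun N => ∑ n ∈ Icc 1 (2 * (N + 1)), u n • x n) atTop (𝓝 S) := by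
    simpa [mul_add, sum_Icc_succ_top] using hodd.add hlast
  exact ⟨S, tendsto_of_tendsto_two_mul_of_tendsto_two_mul_add_one
    ((tendsto_add_atTop_iff_nat 1).1 heven) hodd⟩

noncomputable def thueMorseProd (f : ℕ → ℝ) (N : ℕ) : ℝ :=
  ∏ n ∈ Icc 1 N, f n ^ u n

theorem exists_tendsto_thueMorseProd {f : ℕ → ℝ} (hpos : ∀ n, 0 < f (n + 1))
    (hlim : Tendsto f atTop (𝓝 1))
    (hpair : Summable fun m => f (2 * m) / f (2 * m + 1) - 1) :
    ∃ L, 0 < L ∧ Tendsto (thueMorseProd f) atTop (𝓝 L) := by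
  have hlog : Tendsto (fun n => Real.log (f n)) atTop (𝓝 0) := by
    simpa [Function.comp_def] using (Real.continuousAt_log one_ne_zero).tendsto.comp hlim
  have hlogpair : Summable fun m => Real.log (f (2 * m)) - Real.log (f (2 * m + 1)) := by
    -- the `m = 0` term is dropped: `f 0` may be nonpositive
    rw [← summable_nat_add_iff 1]
    refine ((summable_nat_add_iff 1).2 (Real.summable_log_one_add_of_summable hpair)).congr
      fun m => ?_
    rw [add_sub_cancel]
    exact Real.log_div (hpos (2 * m + 1)).ne' (hpos (2 * m + 2)).ne'
  obtain ⟨S, hS⟩ := exists_tendsto_sum_Icc_zsmul_u hlog hlogpair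
  refine ⟨Real.exp S, Real.exp_pos S, ((Real.continuous_exp.tendsto S).comp hS).congr
    fun N => ?_⟩
  rw [Function.comp_apply, Real.exp_sum]
  refine prod_congr rfl fun n hn => ?_
  obtain ⟨k, rfl⟩ : ∃ k, n = k + 1 := ⟨n - 1, by grind⟩
  rw [zsmul_eq_mul, ← Real.log_zpow, Real.exp_log (zpow_pos (hpos k) _)]

noncomputable def linearRatio (p q : ℝ) (n : ℕ) : ℝ := (2 * n + p) / (2 * n + q)

theorem linearRatio_pair (p q : ℝ) (m : ℕ) :
    linearRatio p q (2 * m) / linearRatio p q (2 * m + 1) =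
      (4 * m + p) * (4 * m + 2 + q) / ((4 * m + q) * (4 * m + 2 + p)) := by
  simp only [linearRatio]
  push_cast
  rw [div_div_div_eq]
  ring_nf

theorem exists_tendsto_thueMorseProd_linearRatio {p q : ℝ} (hp : -2 < p) (hq : -2 < q) :
    ∃ L, 0 < L ∧ Tendsto (thueMorseProd (linearRatio p q)) atTop (𝓝 L) := by
  refine exists_tendsto_thueMorseProd (fun n => ?_) ?_ ?_
  · have := n.cast_nonneg (α := ℝ)
    simp only [linearRatio, Nat.cast_add_one]
    exact div_pos (by linarith) (by linarith)
  · have h := tendsto_add_mul_div_add_mul_atTop_nhds p q 2 two_ne_zero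
    rw [div_self two_ne_zero] at h
    exact h.congr fun n => by rw [linearRatio, add_comm p, add_comm q]
  · refine Summable.of_norm_bounded_eventually_nat
      ((Real.summable_one_div_nat_pow.2 one_lt_two).mul_left (2 * |p - q|)) ?_
    filter_upwards [eventually_ge_atTop 1] with m hm
    have hm' : (1 : ℝ) ≤ m := by exact_mod_cast hm
    have h₁ : 0 < 4 * m + q := by linarith
    have h₂ : 0 < 4 * m + 2 + p := by linarith
    rw [linearRatio_pair, div_sub_one (by positivity),
      show (4 * m + p) * (4 * m + 2 + q) - (4 * m + q) * (4 * m + 2 + p) = 2 * (p - q) by ring,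
      norm_div, norm_mul, Real.norm_eq_abs, Real.norm_eq_abs, abs_two,
      Real.norm_of_nonneg (by positivity), mul_one_div]
    gcongr
    nlinarith

theorem thueMorseProd_mul (f g : ℕ → ℝ) (N : ℕ) :
    thueMorseProd (fun n => f n * g n) N = thueMorseProd f N * thueMorseProd g N := by
  simp only [thueMorseProd, mul_zpow, prod_mul_distrib]

theorem thueMorseProd_div (f g : ℕ → ℝ) (N : ℕ) :
    thueMorseProd (fun n => f n / g n) N = thueMorseProd f N / thueMorseProd g N := by
  simp only [thueMorseProd, div_zpow, prod_div_distrib]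

theorem thueMorseProd_pair {f : ℕ → ℝ} (hf : f 1 ≠ 0) (N : ℕ) :
    thueMorseProd (fun m => f (2 * m) / f (2 * m + 1)) N = f 1 * thueMorseProd f (2 * N + 1) := by
  rw [thueMorseProd, thueMorseProd, prod_Icc_two_mul_add_one_zpow_u, mul_inv_cancel_left₀ hf]

theorem tendsto_two_mul_add_one_atTop : Tendsto (fun N : ℕ => 2 * N + 1) atTop atTop :=
  tendsto_atTop_mono (fun n => show n ≤ 2 * n + 1 by omega) tendsto_id

/-- The Woods–Robbins product `∏_{n ≥ 0} ((2n+1)/(2n+2))^{u_n} = 1/√2`, without its `n = 0`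
factor `1/2`. -/
theorem tendsto_thueMorseProd_linearRatio_one_two :
    Tendsto (thueMorseProd (linearRatio 1 2)) atTop (𝓝 √2) := by
  obtain ⟨ω, hω, hW⟩ := exists_tendsto_thueMorseProd_linearRatio (p := 1) (q := 2)
    (by norm_num) (by norm_num)
  obtain ⟨η, hη, hY⟩ := exists_tendsto_thueMorseProd_linearRatio (p := 0) (q := 2)
    (by norm_num) (by norm_num)
  have hpair : ∀ m : ℕ, linearRatio 0 2 (2 * m) / linearRatio 0 2 (2 * m + 1) =
      linearRatio 0 2 m / (linearRatio 1 2 m * linearRatio 1 2 m) := by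
    intro m
    rw [linearRatio_pair]
    simp only [linearRatio]
    field_simp
    ring
  have key : ∀ N, thueMorseProd (linearRatio 0 2) (2 * N + 1) / 2 =
      thueMorseProd (linearRatio 0 2) N /
        (thueMorseProd (linearRatio 1 2) N * thueMorseProd (linearRatio 1 2) N) := by
    intro N
    rw [← thueMorseProd_mul, ← thueMorseProd_div, ← funext hpair,
      thueMorseProd_pair (by norm_num [linearRatio])]
    norm_num [linearRatio]
    ring
  have hsq : η / 2 = η / (ω * ω) :=
    tendsto_nhds_unique ((hY.comp tendsto_two_mul_add_one_atTop).div_const 2)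
      ((hY.div (hW.mul hW) (by positivity)).congr fun N => (key N).symm)
  have hω2 : ω * ω = 2 := by
    field_simp at hsq
    linarith
  rwa [(Real.sqrt_eq_iff_mul_self_eq_of_pos hω).2 hω2]

theorem factor_eq_linearRatio (n : ℕ) :
    ((4 * (n : ℝ) - 1) * (2 * n + 1)) / ((4 * n + 1) * (2 * n - 1)) =
      linearRatio (-1) 1 (2 * n) / linearRatio (-1) 1 (2 * n + 1) *
        (linearRatio 1 2 (2 * n) / linearRatio 1 2 (2 * n + 1)) *
        linearRatio 1 2 n / linearRatio (-1) 1 n := by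
  have : (2 * n - 1 : ℝ) ≠ 0 := sub_ne_zero.2 (by norm_cast; omega)
  rw [linearRatio_pair, linearRatio_pair]
  simp only [linearRatio]
  rw [show (4 * n + 2 + -1 : ℝ) = 4 * n + 1 by ring]
  simp only [← sub_eq_add_neg]
  field_simp
  ring

theorem thueMorseProd_factor_eq (N : ℕ) :
    thueMorseProd (fun n => ((4 * (n : ℝ) - 1) * (2 * n + 1)) / ((4 * n + 1) * (2 * n - 1))) N =
      1 / 3 * thueMorseProd (linearRatio (-1) 1) (2 * N + 1) *
        (3 / 4 * thueMorseProd (linearRatio 1 2) (2 * N + 1)) *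
        thueMorseProd (linearRatio 1 2) N / thueMorseProd (linearRatio (-1) 1) N := by
  simp only [factor_eq_linearRatio]
  rw [thueMorseProd_div, thueMorseProd_mul, thueMorseProd_mul,
    thueMorseProd_pair (by norm_num [linearRatio]), thueMorseProd_pair (by norm_num [linearRatio])]
  norm_num [linearRatio]

/-- The partial products `∏_{n=1}^{N} [((4n-1)(2n+1)) / ((4n+1)(2n-1))]^{u_n}`
converge to `1/2`. -/
theorem stmt_18 :
    Tendsto (fun N : ℕ => ∏ n ∈ Finset.Icc 1 N,
      (((4 * (n : ℝ) - 1) * (2 * (n : ℝ) + 1)) /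
        ((4 * (n : ℝ) + 1) * (2 * (n : ℝ) - 1))) ^ (u n)) atTop (𝓝 (1 / 2)) := by
  obtain ⟨α, hα, hA⟩ := exists_tendsto_thueMorseProd_linearRatio (p := -1) (q := 1)
    (by norm_num) (by norm_num)
  have hW := tendsto_thueMorseProd_linearRatio_one_two
  have hlim := ((((hA.comp tendsto_two_mul_add_one_atTop).const_mul (1 / 3)).mul
    ((hW.comp tendsto_two_mul_add_one_atTop).const_mul (3 / 4))).mul hW).div hA hα.ne'
  rw [show 1 / 3 * α * (3 / 4 * √2) * √2 / α = 1 / 2 by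
    field_simp
    norm_num] at hlim
  exact hlim.congr fun N => (thueMorseProd_factor_eq N).symm
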